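/- For the instanton solutions with holomorphic ρ, the Hopf quantity vanishes: if ρ : U → ℂ is holomorphic, s : U → ℂ smooth with s² = ∂ρ, and ψ₁ = ρs̄/(1+|ρ|²), ψ₂ = s/(1+|ρ|²), then Q := 2(ψ₂∂ψ̄₁ − ψ̄₁∂ψ₂) = 0 on U. -/

import Mathlib

open Complex ComplexConjugate

/-- Wirtinger derivative ∂ = (∂ₓ - i∂_y)/2. -/
noncomputable def wd (f : ℂ → ℂ) (z : ℂ) : ℂ :=
  (fderiv ℝ f z 1 - Complex.I * fderiv ℝ f z Complex.I) / 2

/-- Wirtinger derivative ∂̄ = (∂ₓ + i∂_y)/2. -/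
noncomputable def wdb (f : ℂ → ℂ) (z : ℂ) : ℂ :=
  (fderiv ℝ f z 1 + Complex.I * fderiv ℝ f z Complex.I) / 2

lemma wd_mul {f g : ℂ → ℂ} {z : ℂ} (hf : DifferentiableAt ℝ f z)
    (hg : DifferentiableAt ℝ g z) :
    wd (fun w => f w * g w) z = wd f z * g z + f z * wd g z := by
  unfold wd
  rw [fderiv_fun_mul hf hg]
  simp only [ContinuousLinearMap.add_apply, ContinuousLinearMap.smul_apply, smul_eq_mul]
  ring

lemma wd_conj {f : ℂ → ℂ} {z : ℂ} (hf : DifferentiableAt ℝ f z) :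
    wd (fun w => conj (f w)) z = conj (wdb f z) := by
  have h : fderiv ℝ (fun w => conj (f w)) z =
      (Complex.conjCLE : ℂ →L[ℝ] ℂ).comp (fderiv ℝ f z) :=
    (Complex.conjCLE.hasFDerivAt.comp z hf.hasFDerivAt).fderiv
  unfold wd wdb
  rw [h]
  simp only [ContinuousLinearMap.comp_apply, ContinuousLinearEquiv.coe_coe,
    Complex.conjCLE_apply, map_div₀, map_add, map_mul, Complex.conj_I, map_ofNat]
  ring

theorem stmt_14 (U : Set ℂ) (hU : IsOpen U)
    (ρ : ℂ → ℂ) (hρ : ContDiff ℝ (⊤ : ℕ∞) ρ) (hρhol : ∀ z ∈ U, wdb ρ z = 0)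
    (s : ℂ → ℂ) (hs : ContDiff ℝ (⊤ : ℕ∞) s) (hs2 : ∀ z ∈ U, (s z) ^ 2 = wd ρ z)
    (ψ₁ ψ₂ : ℂ → ℂ)
    (hψ₁ : ∀ z, ψ₁ z = ρ z * conj (s z) / (1 + ‖ρ z‖ ^ 2))
    (hψ₂ : ∀ z, ψ₂ z = s z / (1 + ‖ρ z‖ ^ 2)) :
    ∀ z ∈ U, 2 * (ψ₂ z * wd (fun w => conj (ψ₁ w)) z -
      conj (ψ₁ z) * wd ψ₂ z) = 0 := by
  intro z hz
  have hρd : DifferentiableAt ℝ ρ z := (hρ.differentiable (by simp)) z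
  have hsd : DifferentiableAt ℝ s z := (hs.differentiable (by simp)) z
  -- conj ρ is differentiable
  have hc : DifferentiableAt ℝ (fun w => conj (ρ w)) z :=
    (Complex.conjCLE.differentiableAt).comp z hρd
  -- denominator facts
  have hDne : ∀ w : ℂ, (1 + (‖ρ w‖ : ℂ) ^ 2) ≠ 0 := by
    intro w
    have h1 : ((1 + ‖ρ w‖ ^ 2 : ℝ) : ℂ) ≠ 0 := by
      rw [Complex.ofReal_ne_zero]
      positivity
    simpa using h1
  -- ψ₂ is differentiable
  have hψ₂fun : ψ₂ = fun w => s w / (1 + (‖ρ w‖ : ℂ) ^ 2) := funext hψ₂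
  have hDeq : ∀ w : ℂ, (1 + (‖ρ w‖ : ℂ) ^ 2) = 1 + ρ w * conj (ρ w) := by
    intro w
    rw [Complex.mul_conj]
    norm_cast
    rw [Complex.sq_norm]
  have hψ₂d : DifferentiableAt ℝ ψ₂ z := by
    rw [hψ₂fun]
    have : (fun w => s w / (1 + (‖ρ w‖ : ℂ) ^ 2)) =
        fun w => s w * (1 + ρ w * conj (ρ w))⁻¹ := by
      funext w; rw [hDeq w, div_eq_mul_inv]
    rw [this]
    have hne : (1 + ρ z * conj (ρ z)) ≠ 0 := by rw [← hDeq]; exact hDne z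
    exact hsd.mul (((hρd.mul hc).const_add 1).inv hne)
  -- conj ψ₁ = conj ρ * ψ₂
  have hkey : (fun w => conj (ψ₁ w)) = fun w => conj (ρ w) * ψ₂ w := by
    funext w
    rw [hψ₁ w, hψ₂ w, map_div₀, map_mul]
    have : conj (1 + (‖ρ w‖ : ℂ) ^ 2) = 1 + (‖ρ w‖ : ℂ) ^ 2 := by
      simp [map_add, map_pow, Complex.conj_ofReal]
    rw [this, Complex.conj_conj, mul_div_assoc]
  -- ∂(conj ρ) = 0
  have hwdc : wd (fun w => conj (ρ w)) z = 0 := by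
    rw [wd_conj hρd, hρhol z hz, map_zero]
  -- product rule
  have hprod : wd (fun w => conj (ψ₁ w)) z = conj (ρ z) * wd ψ₂ z := by
    rw [hkey, wd_mul hc hψ₂d, hwdc, zero_mul, zero_add]
  rw [hprod, hψ₁ z, hψ₂ z]
  rw [map_div₀, map_mul, Complex.conj_conj]
  have : conj (1 + (‖ρ z‖ : ℂ) ^ 2) = 1 + (‖ρ z‖ : ℂ) ^ 2 := by
    simp [map_add, map_pow, Complex.conj_ofReal]
  rw [this]
  ring
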